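/- Let $u, v : D \to (0,\infty)$ be smooth positive functions on a domain $D \subset \mathbb{C}$. Then at any point, $u v (u+v) \left( u^2 \cdot \frac{-2\partial_z\partial_{\bar z} \log u}{u} + v^2 \cdot \frac{-2\partial_z\partial_{\bar z} \log v}{v} - (u+v)^2 \cdot \frac{-2\partial_z\partial_{\bar z} \log(u+v)}{u+v} \right) = 2 |u \, \partial_z v - v \, \partial_z u|^2 \geq 0$; equivalently, $u v (u+v) \big( (u+v)\,\partial_z\partial_{\bar z}\log(u+v) - u\,\partial_z\partial_{\bar z}\log u - v\,\partial_z\partial_{\bar z}\log v \big) = |u\,\partial_z v - v\,\partial_z u|^2$. -/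

import Mathlib

open Complex

/-- Wirtinger derivative `∂_z f = ½(∂_x f - i ∂_y f)`. -/
noncomputable def wdz (f : ℂ → ℂ) (z : ℂ) : ℂ :=
  (1 / 2) * (fderiv ℝ f z 1 - Complex.I * fderiv ℝ f z Complex.I)

/-- Wirtinger derivative `∂_z̄ f = ½(∂_x f + i ∂_y f)`. -/
noncomputable def wdzbar (f : ℂ → ℂ) (z : ℂ) : ℂ :=
  (1 / 2) * (fderiv ℝ f z 1 + Complex.I * fderiv ℝ f z Complex.I)

/-- `∂_z ∂_z̄ f`. -/
noncomputable def lapC (f : ℂ → ℂ) (z : ℂ) : ℂ := wdz (fun w => wdzbar f w) z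

private lemma fderiv_comp_c {φ f : ℂ → ℂ} {φ' : ℂ} {z : ℂ} (hφ : HasDerivAt φ φ' (f z))
    (hf : DifferentiableAt ℝ f z) (w : ℂ) :
    fderiv ℝ (fun x => φ (f x)) z w = φ' * fderiv ℝ f z w := by
  have h := (hφ.hasFDerivAt.restrictScalars ℝ).comp z hf.hasFDerivAt
  have h2 := h.fderiv
  rw [Function.comp_def] at h2
  rw [h2]
  simp [mul_comm]

private lemma wdz_comp {φ f : ℂ → ℂ} {φ' : ℂ} {z : ℂ} (hφ : HasDerivAt φ φ' (f z))
    (hf : DifferentiableAt ℝ f z) :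
    wdz (fun x => φ (f x)) z = φ' * wdz f z := by
  unfold wdz
  rw [fderiv_comp_c hφ hf, fderiv_comp_c hφ hf]
  ring

private lemma wdzbar_comp {φ f : ℂ → ℂ} {φ' : ℂ} {z : ℂ} (hφ : HasDerivAt φ φ' (f z))
    (hf : DifferentiableAt ℝ f z) :
    wdzbar (fun x => φ (f x)) z = φ' * wdzbar f z := by
  unfold wdzbar
  rw [fderiv_comp_c hφ hf, fderiv_comp_c hφ hf]
  ring

private lemma wdz_congr {f g : ℂ → ℂ} {z : ℂ} (h : f =ᶠ[nhds z] g) : wdz f z = wdz g z := by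
  unfold wdz; rw [h.fderiv_eq]

private lemma wdz_mul {f g : ℂ → ℂ} {z : ℂ} (hf : DifferentiableAt ℝ f z)
    (hg : DifferentiableAt ℝ g z) :
    wdz (fun x => f x * g x) z = wdz f z * g z + f z * wdz g z := by
  unfold wdz
  rw [fderiv_fun_mul hf hg]
  simp only [ContinuousLinearMap.add_apply, ContinuousLinearMap.smul_apply, smul_eq_mul]
  ring

private lemma wdz_add {f g : ℂ → ℂ} {z : ℂ} (hf : DifferentiableAt ℝ f z)
    (hg : DifferentiableAt ℝ g z) :
    wdz (fun x => f x + g x) z = wdz f z + wdz g z := by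
  unfold wdz
  rw [fderiv_fun_add hf hg]
  simp only [ContinuousLinearMap.add_apply]
  ring

private lemma wdzbar_add {f g : ℂ → ℂ} {z : ℂ} (hf : DifferentiableAt ℝ f z)
    (hg : DifferentiableAt ℝ g z) :
    wdzbar (fun x => f x + g x) z = wdzbar f z + wdzbar g z := by
  unfold wdzbar
  rw [fderiv_fun_add hf hg]
  simp only [ContinuousLinearMap.add_apply]
  ring

private lemma diff_wdzbar {f : ℂ → ℂ} {p : ℂ} (hf : ContDiffAt ℝ (⊤ : ℕ∞) f p) :
    DifferentiableAt ℝ (fun w => wdzbar f w) p := by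
  have h1 : ContDiffAt ℝ 1 (fderiv ℝ f) p := hf.fderiv_right (by exact WithTop.coe_le_coe.2 le_top)
  have hd : DifferentiableAt ℝ (fderiv ℝ f) p := h1.differentiableAt one_ne_zero
  have e1 : DifferentiableAt ℝ (fun w => fderiv ℝ f w 1) p :=
    ((ContinuousLinearMap.apply ℝ ℂ (1 : ℂ)).differentiable.differentiableAt).comp p hd
  have eI : DifferentiableAt ℝ (fun w => fderiv ℝ f w Complex.I) p :=
    ((ContinuousLinearMap.apply ℝ ℂ Complex.I).differentiable.differentiableAt).comp p hd
  unfold wdzbar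
  exact (e1.add (eI.const_mul _)).const_mul _

private lemma lapC_log {D : Set ℂ} (hD : IsOpen D) {f : ℂ → ℂ} (hf : ContDiffOn ℝ (⊤ : ℕ∞) f D)
    (hpos : ∀ z ∈ D, (f z).im = 0 ∧ 0 < (f z).re) {p : ℂ} (hp : p ∈ D) :
    lapC (fun w => Complex.log (f w)) p
      = (f p)⁻¹ * lapC f p - ((f p) ^ 2)⁻¹ * (wdz f p * wdzbar f p) := by
  have hfd : ∀ z ∈ D, DifferentiableAt ℝ f z := fun z hz =>
    (hf.contDiffAt (hD.mem_nhds hz)).differentiableAt (by simp)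
  have hslit : ∀ z ∈ D, f z ∈ Complex.slitPlane := fun z hz =>
    Complex.mem_slitPlane_iff.2 (Or.inl (hpos z hz).2)
  have key : ∀ z ∈ D, wdzbar (fun w => Complex.log (f w)) z = (f z)⁻¹ * wdzbar f z :=
    fun z hz => wdzbar_comp (Complex.hasDerivAt_log (hslit z hz)) (hfd z hz)
  have hev : (fun w => wdzbar (fun w => Complex.log (f w)) w)
      =ᶠ[nhds p] (fun w => (f w)⁻¹ * wdzbar f w) := by
    filter_upwards [hD.mem_nhds hp] with z hz using key z hz
  have hfz : f p ≠ 0 := by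
    intro h
    have := (hpos p hp).2
    rw [h] at this
    simp at this
  have hinv : DifferentiableAt ℝ (fun w => (f w)⁻¹) p := (hfd p hp).inv hfz
  have hwb : DifferentiableAt ℝ (fun w => wdzbar f w) p :=
    diff_wdzbar (hf.contDiffAt (hD.mem_nhds hp))
  have step : lapC (fun w => Complex.log (f w)) p
      = wdz (fun w => (f w)⁻¹) p * wdzbar f p + (f p)⁻¹ * lapC f p := by
    unfold lapC
    rw [wdz_congr hev, wdz_mul hinv hwb]
  rw [step, wdz_comp (hasDerivAt_inv hfz) (hfd p hp)]
  unfold lapC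
  ring

private lemma fderiv_im_zero {D : Set ℂ} (hD : IsOpen D) {f : ℂ → ℂ}
    (him : ∀ z ∈ D, (f z).im = 0) {p : ℂ} (hp : p ∈ D)
    (hfd : DifferentiableAt ℝ f p) (w : ℂ) : (fderiv ℝ f p w).im = 0 := by
  have h1 : HasFDerivAt (fun z => (f z).im) (Complex.imCLM.comp (fderiv ℝ f p)) p :=
    Complex.imCLM.hasFDerivAt.comp p hfd.hasFDerivAt
  have h2 : (fun z => (f z).im) =ᶠ[nhds p] (fun _ => (0 : ℝ)) := by
    filter_upwards [hD.mem_nhds hp] with z hz using him z hz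
  have h3 : fderiv ℝ (fun z => (f z).im) p = 0 := by
    rw [h2.fderiv_eq]; exact fderiv_const_apply 0
  have h4 := h1.fderiv
  rw [h3] at h4
  have h5 := congrArg (fun L : ℂ →L[ℝ] ℝ => L w) h4
  simpa using h5.symm

private lemma conj_wdz {D : Set ℂ} (hD : IsOpen D) {f : ℂ → ℂ}
    (him : ∀ z ∈ D, (f z).im = 0) {p : ℂ} (hp : p ∈ D)
    (hfd : DifferentiableAt ℝ f p) :
    (starRingEnd ℂ) (wdz f p) = wdzbar f p := by
  have h1 : (starRingEnd ℂ) (fderiv ℝ f p 1) = fderiv ℝ f p 1 :=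
    Complex.conj_eq_iff_im.2 (fderiv_im_zero hD him hp hfd 1)
  have hI : (starRingEnd ℂ) (fderiv ℝ f p Complex.I) = fderiv ℝ f p Complex.I :=
    Complex.conj_eq_iff_im.2 (fderiv_im_zero hD him hp hfd Complex.I)
  unfold wdz wdzbar
  have h2 : (starRingEnd ℂ) (2 : ℂ) = 2 := by
    simp [Complex.conj_eq_iff_im]
  rw [map_mul, map_sub, map_mul, h1, hI, Complex.conj_I, map_div₀, map_one, h2]
  ring

theorem stmt_8 (D : Set ℂ) (hD : IsOpen D) (u v : ℂ → ℂ)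
    (hu : ContDiffOn ℝ (⊤ : ℕ∞) u D) (hv : ContDiffOn ℝ (⊤ : ℕ∞) v D)
    (hureal : ∀ z ∈ D, (u z).im = 0 ∧ 0 < (u z).re)
    (hvreal : ∀ z ∈ D, (v z).im = 0 ∧ 0 < (v z).re) :
    ∀ p ∈ D,
      u p * v p * (u p + v p) *
        ((u p + v p) * lapC (fun w => Complex.log (u w + v w)) p -
          u p * lapC (fun w => Complex.log (u w)) p -
          v p * lapC (fun w => Complex.log (v w)) p) =
      (‖u p * wdz v p - v p * wdz u p‖ : ℂ) ^ 2 := by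
  intro p hp
  have hmem : D ∈ nhds p := hD.mem_nhds hp
  have hud : ∀ z ∈ D, DifferentiableAt ℝ u z := fun z hz =>
    (hu.contDiffAt (hD.mem_nhds hz)).differentiableAt (by simp)
  have hvd : ∀ z ∈ D, DifferentiableAt ℝ v z := fun z hz =>
    (hv.contDiffAt (hD.mem_nhds hz)).differentiableAt (by simp)
  have hsum : ContDiffOn ℝ (⊤ : ℕ∞) (fun w => u w + v w) D := hu.add hv
  have hsumreal : ∀ z ∈ D, ((fun w => u w + v w) z).im = 0 ∧ 0 < ((fun w => u w + v w) z).re := by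
    intro z hz
    obtain ⟨h1, h2⟩ := hureal z hz
    obtain ⟨h3, h4⟩ := hvreal z hz
    refine ⟨by simp [Complex.add_im, h1, h3], ?_⟩
    simp only [Complex.add_re]
    positivity
  have h1 := lapC_log hD hu hureal hp
  have h2 := lapC_log hD hv hvreal hp
  have h3 := lapC_log hD hsum hsumreal hp
  beta_reduce at h3
  have hwds : wdz (fun w => u w + v w) p = wdz u p + wdz v p := wdz_add (hud p hp) (hvd p hp)
  have hwbs : wdzbar (fun w => u w + v w) p = wdzbar u p + wdzbar v p :=
    wdzbar_add (hud p hp) (hvd p hp)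
  have hlaps : lapC (fun w => u w + v w) p = lapC u p + lapC v p := by
    have hev : (fun w => wdzbar (fun w => u w + v w) w)
        =ᶠ[nhds p] fun w => wdzbar u w + wdzbar v w := by
      filter_upwards [hmem] with z hz using wdzbar_add (hud z hz) (hvd z hz)
    unfold lapC
    rw [wdz_congr hev, wdz_add (diff_wdzbar (hu.contDiffAt hmem)) (diff_wdzbar (hv.contDiffAt hmem))]
  have ha : u p ≠ 0 := by
    intro h; have := (hureal p hp).2; rw [h] at this; simp at this
  have hb : v p ≠ 0 := by
    intro h; have := (hvreal p hp).2; rw [h] at this; simp at this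
  have hab : u p + v p ≠ 0 := by
    intro h
    have h2 := (hsumreal p hp).2
    beta_reduce at h2
    rw [h] at h2; simp at h2
  have hcu : (starRingEnd ℂ) (wdz u p) = wdzbar u p :=
    conj_wdz hD (fun z hz => (hureal z hz).1) hp (hud p hp)
  have hcv : (starRingEnd ℂ) (wdz v p) = wdzbar v p :=
    conj_wdz hD (fun z hz => (hvreal z hz).1) hp (hvd p hp)
  have hcua : (starRingEnd ℂ) (u p) = u p := Complex.conj_eq_iff_im.2 (hureal p hp).1
  have hcvb : (starRingEnd ℂ) (v p) = v p := Complex.conj_eq_iff_im.2 (hvreal p hp).1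
  have hrhs : ((‖u p * wdz v p - v p * wdz u p‖ : ℝ) : ℂ) ^ 2
      = (u p * wdz v p - v p * wdz u p) *
        (starRingEnd ℂ) (u p * wdz v p - v p * wdz u p) := by
    rw [Complex.mul_conj, ← Complex.sq_norm]
    norm_cast
  have hconj : (starRingEnd ℂ) (u p * wdz v p - v p * wdz u p)
      = u p * wdzbar v p - v p * wdzbar u p := by
    rw [map_sub, map_mul, map_mul, hcu, hcv, hcua, hcvb]
  rw [h1, h2, h3, hwds, hwbs, hlaps, hrhs, hconj]
  field_simp [ha, hb, hab]
  ring
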